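/- Let (M,φ,g) be a 2k-dimensional anti-paraKähler manifold and (TM,g_BS) its tangent bundle with the Berger type deformed Sasaki metric. If a vector field ξ on M, regarded as a map ξ : (M,g) → (TM,g_BS), is an isometric immersion, then ξ is a totally geodesic map; furthermore, ξ is harmonic. -/

import Mathlib

/-!
A local-coordinate formalization (in a global chart `ℝⁿ`, `n = 2k`) of the
geometry of the tangent bundle of an anti-paraKähler manifold `(M, φ, g)`
endowed with the Berger type deformed Sasaki metric `g_BS`.
-/

open scoped BigOperators
open Matrix

namespace BergerSasaki

variable {n : ℕ}

/-- Partial derivative `∂/∂xⁱ` of a real function on the chart `ℝⁿ`. -/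
noncomputable def pd (i : Fin n) (f : (Fin n → ℝ) → ℝ) (x : Fin n → ℝ) : ℝ :=
  fderiv ℝ f x (Pi.single i 1)

/-- The local data of an almost anti-paraHermitian manifold in a global chart `ℝⁿ`:
a Riemannian metric `g` and an almost paracomplex structure `phi` (`phi ∘ phi = id`;
the two eigenbundles for the eigenvalues `±1` have the same rank, i.e. `phi` is
trace free), such that `g(phi X, phi Y) = g(X , Y)`. -/
structure PreData (n : ℕ) where
  g : (Fin n → ℝ) → Matrix (Fin n) (Fin n) ℝ
  phi : (Fin n → ℝ) → Matrix (Fin n) (Fin n) ℝ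
  g_smooth : ∀ i j, ContDiff ℝ (⊤ : ℕ∞) fun x => g x i j
  phi_smooth : ∀ i j, ContDiff ℝ (⊤ : ℕ∞) fun x => phi x i j
  g_symm : ∀ x, (g x).IsSymm
  g_posdef : ∀ x, (g x).PosDef
  phi_sq : ∀ x, phi x * phi x = 1
  phi_trace : ∀ x, (phi x).trace = 0
  compat : ∀ x, (phi x)ᵀ * g x * phi x = g x

/-- Christoffel symbols `Γ^h_{ij}` of the Levi-Civita connection `∇` of `D.g`. -/
noncomputable def Gamma (D : PreData n) (x : Fin n → ℝ) (i j h : Fin n) : ℝ :=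
  (1 / 2) * ∑ l, (D.g x)⁻¹ h l *
    (pd i (fun y => D.g y j l) x + pd j (fun y => D.g y i l) x - pd l (fun y => D.g y i j) x)

/-- Local components `R_{ijl}{}^h` of the Riemann curvature tensor of `∇`. -/
noncomputable def Riem (D : PreData n) (x : Fin n → ℝ) (i j l h : Fin n) : ℝ :=
  pd i (fun y => Gamma D y j l h) x - pd j (fun y => Gamma D y i l h) x
    + ∑ m, Gamma D x j l m * Gamma D x i m h - ∑ m, Gamma D x i l m * Gamma D x j m h

/-- The anti-paraKähler condition `∇ φ = 0`, in local components. -/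
def IsAntiParaKahler (D : PreData n) : Prop :=
  ∀ x i j h,
    pd i (fun y => D.phi y h j) x + ∑ m, Gamma D x i m h * D.phi x m j
      - ∑ m, Gamma D x i j m * D.phi x h m = 0

/-- Points of the induced chart of the tangent bundle `TM`: a pair
`(x, u)` of a base point and a fibre coordinate. -/
abbrev TMpt (n : ℕ) := (Fin n → ℝ) × (Fin n → ℝ)

/-- Index set for the induced coordinates on `TM`: `Sum.inl i ↔ xⁱ`, `Sum.inr i ↔ uⁱ`. -/
abbrev Idx (n : ℕ) := Fin n ⊕ Fin n

/-- Natural components of a point/vector of the tangent bundle chart. -/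
def comp (p : TMpt n) : Idx n → ℝ := Sum.elim p.1 p.2

/-- The natural coordinate basis vectors of the tangent bundle chart. -/
noncomputable def ebase (a : Idx n) : TMpt n :=
  Sum.elim (fun i => (Pi.single i 1, 0)) (fun i => (0, Pi.single i 1)) a

/-- Partial derivatives on the tangent bundle chart. -/
noncomputable def pdT (a : Idx n) (f : TMpt n → ℝ) (p : TMpt n) : ℝ :=
  fderiv ℝ f p (ebase a)

/-- `Γ_{i0}{}^h = u^m Γ^h_{im}` (the index `0` denotes contraction with `u`). -/
noncomputable def Gamma0 (D : PreData n) (p : TMpt n) (i h : Fin n) : ℝ :=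
  ∑ m, Gamma D p.1 i m h * p.2 m

/-- Natural components of the adapted frame: `aframe D (Sum.inl i)` is the horizontal
frame field `E_i = ∂/∂xⁱ - Γ_{i0}{}^h ∂/∂u^h`, and `aframe D (Sum.inr i)` is the
vertical frame field `E_ī = ∂/∂uⁱ`. -/
noncomputable def aframe (D : PreData n) (a : Idx n) (p : TMpt n) : Idx n → ℝ :=
  Sum.elim
    (fun i => Sum.elim (fun h => if h = i then (1 : ℝ) else 0) (fun h => - Gamma0 D p i h))
    (fun i => Sum.elim (fun _ => (0 : ℝ)) (fun h => if h = i then 1 else 0)) a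

/-- The matrix expressing adapted components in terms of natural components
(the inverse of the frame matrix of `aframe`). -/
noncomputable def Bmat (D : PreData n) (p : TMpt n) : Matrix (Idx n) (Idx n) ℝ :=
  fun a b =>
    Sum.elim
      (fun h => Sum.elim (fun i => if h = i then (1 : ℝ) else 0) (fun _ => 0) b)
      (fun h => Sum.elim (fun i => Gamma0 D p i h) (fun i => if h = i then 1 else 0) b) a

/-- The lowered vector `w_i = φ^m_i g_{m0}`, i.e. `g(∂_i, φ u)`. -/
noncomputable def wvec (D : PreData n) (p : TMpt n) (i : Fin n) : ℝ :=
  ∑ m, D.phi p.1 m i * (∑ l, D.g p.1 m l * p.2 l)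

/-- The Berger type deformed Sasaki metric in the adapted frame:
block diagonal with blocks `g_{ij}` and `g_{ij} + δ² g(∂_i, φu) g(∂_j, φu)`. -/
noncomputable def gBSad (D : PreData n) (δ : ℝ) (p : TMpt n) : Matrix (Idx n) (Idx n) ℝ :=
  fun a b =>
    Sum.elim
      (fun i => Sum.elim (fun j => D.g p.1 i j) (fun _ => (0 : ℝ)) b)
      (fun i => Sum.elim (fun _ => (0 : ℝ))
        (fun j => D.g p.1 i j + δ ^ 2 * wvec D p i * wvec D p j) b) a

/-- The Berger type deformed Sasaki metric `g_BS` in the natural coordinates of `TM`. -/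
noncomputable def gBS (D : PreData n) (δ : ℝ) (p : TMpt n) : Matrix (Idx n) (Idx n) ℝ :=
  (Bmat D p)ᵀ * gBSad D δ p * Bmat D p

/-- The Sasaki metric `g_S` in the natural coordinates of `TM` (the case `δ = 0`). -/
noncomputable def gS (D : PreData n) (p : TMpt n) : Matrix (Idx n) (Idx n) ℝ :=
  gBS D 0 p

/-- Christoffel symbols of (the Levi-Civita connection of) a metric `G` on the
tangent bundle chart, in natural coordinates. -/
noncomputable def GammaT (G : TMpt n → Matrix (Idx n) (Idx n) ℝ) (p : TMpt n)
    (a b c : Idx n) : ℝ :=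
  (1 / 2) * ∑ d, (G p)⁻¹ c d *
    (pdT a (fun q => G q b d) p + pdT b (fun q => G q a d) p - pdT d (fun q => G q a b) p)

/-- Covariant derivative (w.r.t. the Levi-Civita connection of `G`) of a vector field `Y`
on `TM` in the direction of a vector field `X`, in natural components. -/
noncomputable def covT (G : TMpt n → Matrix (Idx n) (Idx n) ℝ)
    (X Y : TMpt n → Idx n → ℝ) (p : TMpt n) (c : Idx n) : ℝ :=
  ∑ a, X p a * pdT a (fun q => Y q c) p + ∑ a, ∑ b, GammaT G p a b c * X p a * Y p b

/-- `R^{h·}_{·jki} = R_{ljk}{}^s g^{lh} g_{si}`. -/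
noncomputable def Rup (D : PreData n) (x : Fin n → ℝ) (j k i h : Fin n) : ℝ :=
  ∑ l, ∑ s, Riem D x l j k s * (D.g x)⁻¹ l h * D.g x s i

/-- `R^{h·}_{·j0i} = R_{lj0}{}^s g^{lh} g_{si}`, the index `0` contracted with `u`. -/
noncomputable def Rstar (D : PreData n) (x u : Fin n → ℝ) (j i h : Fin n) : ℝ :=
  ∑ l, ∑ s, (∑ m, Riem D x l j m s * u m) * (D.g x)⁻¹ l h * D.g x s i

/-- Second fundamental form (formula (5)), in natural coordinates, of a map `f` from the
tangent bundle chart (source metric `G`) to the base chart, with target Christoffel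
symbols `Γt`. -/
noncomputable def betaTM2M (G : TMpt n → Matrix (Idx n) (Idx n) ℝ)
    (Γt : (Fin n → ℝ) → Fin n → Fin n → Fin n → ℝ) (f : TMpt n → Fin n → ℝ)
    (p : TMpt n) (a b : Idx n) (h : Fin n) : ℝ :=
  pdT a (fun q => pdT b (fun r => f r h) q) p
    - ∑ c, GammaT G p a b c * pdT c (fun r => f r h) p
    + ∑ i, ∑ j, Γt (f p) i j h * pdT a (fun r => f r i) p * pdT b (fun r => f r j) p

/-- Second fundamental form of a map `f` of the base chart to itself, with source
metric `Gsrc.g` and target Christoffel symbols `Γt`. -/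
noncomputable def betaM2M (Gsrc : PreData n)
    (Γt : (Fin n → ℝ) → Fin n → Fin n → Fin n → ℝ) (f : (Fin n → ℝ) → Fin n → ℝ)
    (x : Fin n → ℝ) (i j h : Fin n) : ℝ :=
  pd i (fun y => pd j (fun z => f z h) y) x
    - ∑ m, Gamma Gsrc x i j m * pd m (fun z => f z h) x
    + ∑ a, ∑ b, Γt (f x) a b h * pd i (fun z => f z a) x * pd j (fun z => f z b) x

/-- Natural components of the map `ξ : M → TM`, `x ↦ (x, ξ(x))`, determined by a
vector field `ξ` on `M`. -/
def ximap (ξ : (Fin n → ℝ) → Fin n → ℝ) (x : Fin n → ℝ) : Idx n → ℝ :=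
  Sum.elim x (ξ x)

/-- A vector field `ξ`, regarded as the map `ξ : (M, g) → (TM, g_BS)`, is an isometric
immersion: the pullback of `g_BS` under `x ↦ (x, ξ(x))` equals `g`. -/
def IsIsometricImmersion (D : PreData n) (δ : ℝ) (ξ : (Fin n → ℝ) → Fin n → ℝ) : Prop :=
  ∀ x i j, (∑ a, ∑ b, pd i (fun y => ximap ξ y a) x * pd j (fun y => ximap ξ y b) x *
      gBS D δ (x, ξ x) a b) = D.g x i j

/-- Covariant derivative `∇_i ξ^h` of a vector field. -/
noncomputable def nabla (D : PreData n) (ξ : (Fin n → ℝ) → Fin n → ℝ)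
    (x : Fin n → ℝ) (i h : Fin n) : ℝ :=
  pd i (fun y => ξ y h) x + ∑ m, Gamma D x i m h * ξ x m

/-- Second covariant derivative `∇_i ∇_j ξ^h` of a vector field. -/
noncomputable def nabla2 (D : PreData n) (ξ : (Fin n → ℝ) → Fin n → ℝ)
    (x : Fin n → ℝ) (i j h : Fin n) : ℝ :=
  pd i (fun y => nabla D ξ y j h) x + ∑ m, Gamma D x i m h * nabla D ξ x j m
    - ∑ m, Gamma D x i j m * nabla D ξ x m h

/-- The coefficient `A^h_{mn} = (δ²/(1+δ²)) φ^k_n φ^h_0 g_{mk}` (index `0` contracted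
with the fibre coordinate `u`). -/
noncomputable def Acoef (D : PreData n) (δ : ℝ) (x u : Fin n → ℝ) (m nn h : Fin n) : ℝ :=
  δ ^ 2 / (1 + δ ^ 2) * ∑ l, D.phi x l nn * (∑ r, D.phi x h r * u r) * D.g x m l

/-- Second fundamental form of the map `ξ : (M, g) → (TM, g_BS)`, `x ↦ (x, ξ(x))`,
in natural components. -/
noncomputable def betaM2TM (D : PreData n) (δ : ℝ) (ξ : (Fin n → ℝ) → Fin n → ℝ)
    (x : Fin n → ℝ) (i j : Fin n) (c : Idx n) : ℝ :=
  pd i (fun y => pd j (fun z => ximap ξ z c) y) x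
    - ∑ m, Gamma D x i j m * pd m (fun z => ximap ξ z c) x
    + ∑ a, ∑ b, GammaT (gBS D δ) (x, ξ x) a b c *
        pd i (fun z => ximap ξ z a) x * pd j (fun z => ximap ξ z b) x

/-- Second fundamental form, in natural coordinates, of a map `f : TM → TM`, the source
carrying a metric `G` and the target a (torsion-free) linear connection with
coefficients `Γt`. -/
noncomputable def betaTM2TM (G : TMpt n → Matrix (Idx n) (Idx n) ℝ)
    (Γt : TMpt n → Idx n → Idx n → Idx n → ℝ) (f : TMpt n → TMpt n)
    (p : TMpt n) (a b c : Idx n) : ℝ :=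
  pdT a (fun q => pdT b (fun r => comp (f r) c) q) p
    - ∑ d, GammaT G p a b d * pdT d (fun r => comp (f r) c) p
    + ∑ d, ∑ e, Γt (f p) d e c *
        pdT a (fun r => comp (f r) d) p * pdT b (fun r => comp (f r) e) p

/-- Horizontal projection (w.r.t. the horizontal distribution of `∇`) of a tangent
vector of `TM`, in natural components. -/
noncomputable def hproj (D : PreData n) (p : TMpt n) (v : Idx n → ℝ) : Idx n → ℝ :=
  fun c => ∑ i, v (Sum.inl i) * aframe D (Sum.inl i) p c

/-- Vertical projection of a tangent vector of `TM`, in natural components. -/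
noncomputable def vproj (D : PreData n) (p : TMpt n) (v : Idx n → ℝ) : Idx n → ℝ :=
  fun c => v c - hproj D p v c

/-- The Schouten-Van Kampen connection associated with the Levi-Civita connection of
`g_BS`:  `∇̃_X Y = V(∇_X (V Y)) + H(∇_X (H Y))`. -/
noncomputable def svk (D : PreData n) (δ : ℝ) (X Y : TMpt n → Idx n → ℝ)
    (p : TMpt n) (c : Idx n) : ℝ :=
  vproj D p (covT (gBS D δ) X (fun q => vproj D q (Y q)) p) c
    + hproj D p (covT (gBS D δ) X (fun q => hproj D q (Y q)) p) c

/-- Lie bracket of vector fields on the tangent bundle chart, in natural components. -/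
noncomputable def lieBracketT (X Y : TMpt n → Idx n → ℝ) (p : TMpt n) (c : Idx n) : ℝ :=
  ∑ a, X p a * pdT a (fun q => Y q c) p - ∑ a, Y p a * pdT a (fun q => X q c) p

/-- Torsion tensor `T(X,Y) = ∇_X Y - ∇_Y X - [X,Y]` of a connection (given as an
operator on vector fields) on the tangent bundle chart. -/
noncomputable def torsionOf
    (Conn : (TMpt n → Idx n → ℝ) → (TMpt n → Idx n → ℝ) → TMpt n → Idx n → ℝ)
    (X Y : TMpt n → Idx n → ℝ) (p : TMpt n) (c : Idx n) : ℝ :=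
  Conn X Y p c - Conn Y X p c - lieBracketT X Y p c

/-- The mean connection `∇ᵐ = ∇̃ - ½ T` of the Schouten-Van Kampen connection `∇̃`. -/
noncomputable def meanConn (D : PreData n) (δ : ℝ) (X Y : TMpt n → Idx n → ℝ)
    (p : TMpt n) (c : Idx n) : ℝ :=
  svk D δ X Y p c - (1 / 2) * torsionOf (svk D δ) X Y p c

/-- The constant coordinate vector field `∂/∂x^a` on the tangent bundle chart. -/
def natE (a : Idx n) : TMpt n → Idx n → ℝ := fun _ c => if c = a then 1 else 0

end BergerSasaki

/-!
The pullback of `g_BS` along `x ↦ (x, ξ x)` is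
`g(X, Y) + g(∇_X ξ, ∇_Y ξ) + δ² g(∇_X ξ, φξ) g(∇_Y ξ, φξ)`, so an isometric immersion has
`∇ξ = 0`, i.e. `dξ(∂ᵢ)` is the horizontal lift `Eᵢ` at `ξ(x)`. Lowering the second fundamental
form with `g_BS` and inserting the Koszul formula for the Christoffel symbols of `g_BS` leaves
only derivatives of `g_BS(Eⱼ, ·)` and of `g_BS(Eᵢ, Eⱼ) = gᵢⱼ ∘ π`, because the derivatives of
the horizontal lifts are vertical and vertical vectors are `g_BS`-orthogonal to horizontal
ones. What remains is the Koszul formula of `g` itself, so the lowered form vanishes, and since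
`g_BS` is nondegenerate so does `β(ξ)`, hence also its trace `τ(ξ)`.
-/

section

variable {E : Type*} [NormedAddCommGroup E] [NormedSpace ℝ E] {k : WithTop ℕ∞}

theorem contDiff_matrix_det {ι : Type*} [Fintype ι] [DecidableEq ι] {M : E → Matrix ι ι ℝ}
    (hM : ∀ i j, ContDiff ℝ k fun x => M x i j) : ContDiff ℝ k fun x => (M x).det := by
  simp only [det_apply']
  exact ContDiff.sum fun σ _ => contDiff_const.mul (contDiff_prod fun i _ => hM (σ i) i)

theorem contDiff_matrix_inv_apply {ι : Type*} [Fintype ι] [DecidableEq ι] {M : E → Matrix ι ι ℝ}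
    (hM : ∀ i j, ContDiff ℝ k fun x => M x i j) (hdet : ∀ x, (M x).det ≠ 0) (i j : ι) :
    ContDiff ℝ k fun x => (M x)⁻¹ i j := by
  simp only [inv_def, Ring.inverse_eq_inv', Matrix.smul_apply, smul_eq_mul]
  simp_rw [adjugate_apply]
  refine ((contDiff_matrix_det hM).inv hdet).mul (contDiff_matrix_det fun a b => ?_)
  by_cases hab : a = j
  · simp only [hab, updateRow_self]
    exact contDiff_const
  · simp only [updateRow_ne hab]
    exact hM a b

theorem fderiv_dotProduct_apply {ι : Type*} [Fintype ι] {u v : E → ι → ℝ} {x : E}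
    (hu : ∀ a, DifferentiableAt ℝ (fun y => u y a) x)
    (hv : ∀ a, DifferentiableAt ℝ (fun y => v y a) x) (w : E) :
    fderiv ℝ (fun y => u y ⬝ᵥ v y) x w =
      (fun a => fderiv ℝ (fun y => u y a) x w) ⬝ᵥ v x
        + u x ⬝ᵥ fun a => fderiv ℝ (fun y => v y a) x w := by
  simp only [dotProduct]
  rw [fderiv_fun_sum (A := fun a y => u y a * v y a) fun a _ => (hu a).mul (hv a)]
  simp [fderiv_fun_mul (hu _) (hv _), Finset.sum_add_distrib, mul_comm, add_comm]

theorem fderiv_dotProduct_mulVec_apply {ι : Type*} [Fintype ι] {u v : E → ι → ℝ}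
    {M : E → Matrix ι ι ℝ} {x : E} (hu : ∀ a, DifferentiableAt ℝ (fun y => u y a) x)
    (hM : ∀ a b, DifferentiableAt ℝ (fun y => M y a b) x)
    (hv : ∀ a, DifferentiableAt ℝ (fun y => v y a) x) (w : E) :
    fderiv ℝ (fun y => u y ⬝ᵥ M y *ᵥ v y) x w =
      (fun a => fderiv ℝ (fun y => u y a) x w) ⬝ᵥ M x *ᵥ v x
        + u x ⬝ᵥ (of fun a b => fderiv ℝ (fun y => M y a b) x w) *ᵥ v x
        + u x ⬝ᵥ M x *ᵥ fun a => fderiv ℝ (fun y => v y a) x w := by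
  have hMv (a : ι) : DifferentiableAt ℝ (fun y => (M y *ᵥ v y) a) x :=
    DifferentiableAt.fun_sum fun b _ => (hM a b).mul (hv b)
  rw [fderiv_dotProduct_apply hu hMv, add_assoc, ← dotProduct_add]
  congr 2
  ext a
  exact fderiv_dotProduct_apply (hM a) hv w

theorem fderiv_fderiv_apply_comm {f : E → ℝ} (hf : ContDiff ℝ 2 f) (x v w : E) :
    fderiv ℝ (fun y => fderiv ℝ f y v) x w = fderiv ℝ (fun y => fderiv ℝ f y w) x v := by
  have hdf : Differentiable ℝ (fderiv ℝ f) :=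
    (hf.fderiv_right (m := 1) le_rfl).differentiable one_ne_zero
  have happly (u : E) :
      fderiv ℝ (fun y => fderiv ℝ f y u) x = (fderiv ℝ (fderiv ℝ f) x).flip u := by
    rw [fderiv_clm_apply (hdf x) (differentiableAt_const u)]
    simp
  rw [happly, happly]
  exact hf.contDiffAt.isSymmSndFDerivAt (by simp) w v

theorem dotProduct_mulVec_eq_sum_sum {ι : Type*} [Fintype ι] (M : Matrix ι ι ℝ) (u v : ι → ℝ) :
    u ⬝ᵥ M *ᵥ v = ∑ a, ∑ b, u a * v b * M a b := by
  simp only [dotProduct, mulVec, Finset.mul_sum]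
  exact Finset.sum_congr rfl fun a _ => Finset.sum_congr rfl fun b _ => by ring

theorem sumElim_zero_dotProduct_sumElim_zero {ι κ : Type*} [Fintype ι] [Fintype κ]
    (u : κ → ℝ) (v : ι → ℝ) : Sum.elim (0 : ι → ℝ) u ⬝ᵥ Sum.elim v 0 = 0 := by
  simp [sumElim_dotProduct_sumElim]

end

namespace BergerSasaki

variable {n : ℕ} (D : PreData n) (δ : ℝ)

theorem PreData.det_g_ne_zero (x : Fin n → ℝ) : (D.g x).det ≠ 0 :=
  (D.g_posdef x).det_pos.ne'

theorem PreData.g_apply_comm (x : Fin n → ℝ) (i j : Fin n) : D.g x i j = D.g x j i :=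
  ((D.g_symm x).apply i j).symm

theorem contDiff_pd {f : (Fin n → ℝ) → ℝ} (hf : ContDiff ℝ (⊤ : ℕ∞) f) (i : Fin n) :
    ContDiff ℝ (⊤ : ℕ∞) (pd i f) :=
  (hf.fderiv_right (m := (⊤ : ℕ∞)) le_rfl).clm_apply contDiff_const

theorem contDiff_Gamma (i j h : Fin n) : ContDiff ℝ (⊤ : ℕ∞) fun x => Gamma D x i j h := by
  have hg := D.g_smooth
  have hpd (a b c : Fin n) := contDiff_pd (hg b c) a
  have hinv := contDiff_matrix_inv_apply hg D.det_g_ne_zero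
  exact contDiff_const.mul <| ContDiff.sum fun l _ =>
    (hinv h l).mul (((hpd i j l).add (hpd j i l)).sub (hpd l i j))

theorem contDiff_gBS (a b : Idx n) : ContDiff ℝ (⊤ : ℕ∞) fun p => gBS D δ p a b := by
  have hg := D.g_smooth
  have hphi := D.phi_smooth
  have hΓ := contDiff_Gamma D
  simp only [gBS, mul_apply, transpose_apply]
  refine ContDiff.sum fun c _ => ContDiff.mul (ContDiff.sum fun e _ => ?_) ?_
  · rcases a with i | i <;> rcases c with j | j <;> rcases e with h | h <;>
      simp only [Bmat, gBSad, wvec, Gamma0, Sum.elim_inl, Sum.elim_inr] <;> fun_prop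
  · rcases b with i | i <;> rcases c with j | j <;>
      simp only [Bmat, Gamma0, Sum.elim_inl, Sum.elim_inr] <;> fun_prop

theorem gBSad_eq_fromBlocks (p : TMpt n) :
    gBSad D δ p = fromBlocks (D.g p.1) 0 0 (D.g p.1 + δ ^ 2 • vecMulVec (wvec D p) (wvec D p)) := by
  ext (i | i) (j | j) <;> simp [gBSad, vecMulVec_apply, mul_assoc]

theorem Bmat_eq_fromBlocks (p : TMpt n) :
    Bmat D p = fromBlocks 1 0 (of fun h i => Gamma0 D p i h) 1 := by
  ext (h | h) (i | i) <;> simp [Bmat, one_apply]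

theorem det_Bmat (p : TMpt n) : (Bmat D p).det = 1 := by
  simp [Bmat_eq_fromBlocks]

theorem isUnit_det_gBS (p : TMpt n) : IsUnit (gBS D δ p).det := by
  have hfib : (D.g p.1 + δ ^ 2 • vecMulVec (wvec D p) (wvec D p)).PosDef :=
    (D.g_posdef p.1).add_posSemidef
      ((posSemidef_vecMulVec_self_star (wvec D p)).smul (sq_nonneg δ))
  rw [isUnit_iff_ne_zero, gBS, det_mul, det_mul, det_transpose, det_Bmat, gBSad_eq_fromBlocks,
    det_fromBlocks_zero₂₁]
  simpa using ⟨D.det_g_ne_zero p.1, hfib.det_pos.ne'⟩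

theorem gBS_isSymm (p : TMpt n) : (gBS D δ p).IsSymm := by
  have had : (gBSad D δ p).IsSymm := by
    rw [gBSad_eq_fromBlocks]
    refine IsSymm.fromBlocks (D.g_symm p.1) (by simp) ((D.g_symm p.1).add ?_)
    exact IsSymm.smul (transpose_vecMulVec _ _) _
  rw [IsSymm, gBS, transpose_mul, transpose_mul, transpose_transpose, had.eq, Matrix.mul_assoc]

theorem dotProduct_gBS_mulVec (p : TMpt n) (u v : Idx n → ℝ) :
    u ⬝ᵥ gBS D δ p *ᵥ v = (Bmat D p *ᵥ u) ⬝ᵥ gBSad D δ p *ᵥ (Bmat D p *ᵥ v) := by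
  rw [gBS, ← mulVec_mulVec, ← mulVec_mulVec, dotProduct_mulVec, vecMul_transpose]

theorem sumElim_dotProduct_gBSad_mulVec (p : TMpt n) (u₁ u₂ v₁ v₂ : Fin n → ℝ) :
    Sum.elim u₁ u₂ ⬝ᵥ gBSad D δ p *ᵥ Sum.elim v₁ v₂ =
      u₁ ⬝ᵥ D.g p.1 *ᵥ v₁ + u₂ ⬝ᵥ D.g p.1 *ᵥ v₂
        + δ ^ 2 * (u₂ ⬝ᵥ wvec D p) * (v₂ ⬝ᵥ wvec D p) := by
  rw [gBSad_eq_fromBlocks, fromBlocks_mulVec]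
  simp only [Sum.elim_comp_inl, Sum.elim_comp_inr, zero_mulVec, add_zero, zero_add,
    sumElim_dotProduct_sumElim, add_mulVec, smul_mulVec, dotProduct_add, dotProduct_smul,
    vecMulVec_mulVec, op_smul_eq_smul, smul_eq_mul]
  rw [dotProduct_comm (wvec D p) v₂]
  ring

theorem Bmat_mulVec_aframe (p : TMpt n) (c : Idx n) :
    Bmat D p *ᵥ aframe D c p = Pi.single c 1 := by
  ext a
  rcases c with i | i <;> rcases a with h | h <;>
    simp [mulVec, dotProduct, Fintype.sum_sum_type, Bmat, aframe, Pi.single_apply,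
      ite_mul, mul_ite]

noncomputable def ximapDeriv (ξ : (Fin n → ℝ) → Fin n → ℝ) (x : Fin n → ℝ) (i : Fin n) :
    Idx n → ℝ :=
  fun a => pd i (fun y => ximap ξ y a) x

theorem pd_apply_self (i h : Fin n) (x : Fin n → ℝ) :
    pd i (fun y : Fin n → ℝ => y h) x = (Pi.single i 1 : Fin n → ℝ) h := by
  simp [pd, (hasFDerivAt_apply h x).fderiv]

theorem ximapDeriv_inl (ξ : (Fin n → ℝ) → Fin n → ℝ) (x : Fin n → ℝ) (i h : Fin n) :
    ximapDeriv ξ x i (Sum.inl h) = (Pi.single i 1 : Fin n → ℝ) h :=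
  pd_apply_self i h x

theorem Bmat_mulVec_ximapDeriv (ξ : (Fin n → ℝ) → Fin n → ℝ) (x : Fin n → ℝ) (i : Fin n) :
    Bmat D (x, ξ x) *ᵥ ximapDeriv ξ x i = Sum.elim (Pi.single i 1) (nabla D ξ x i) := by
  ext (h | h)
  · simp [mulVec, dotProduct, Fintype.sum_sum_type, Bmat, ximapDeriv_inl, Pi.single_apply]
  · simp [mulVec, dotProduct, Fintype.sum_sum_type, Bmat, ximapDeriv_inl, Pi.single_apply,
      nabla, Gamma0, ite_mul]
    exact add_comm _ _

theorem ximapDeriv_dotProduct_gBS_mulVec (ξ : (Fin n → ℝ) → Fin n → ℝ) (x : Fin n → ℝ)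
    (i j : Fin n) :
    ximapDeriv ξ x i ⬝ᵥ gBS D δ (x, ξ x) *ᵥ ximapDeriv ξ x j =
      D.g x i j + nabla D ξ x i ⬝ᵥ D.g x *ᵥ nabla D ξ x j
        + δ ^ 2 * (nabla D ξ x i ⬝ᵥ wvec D (x, ξ x)) * (nabla D ξ x j ⬝ᵥ wvec D (x, ξ x)) := by
  rw [dotProduct_gBS_mulVec, Bmat_mulVec_ximapDeriv, Bmat_mulVec_ximapDeriv,
    sumElim_dotProduct_gBSad_mulVec]
  simp

theorem nabla_eq_zero_of_isIsometricImmersion {ξ : (Fin n → ℝ) → Fin n → ℝ}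
    (hiso : IsIsometricImmersion D δ ξ) (x : Fin n → ℝ) (i : Fin n) : nabla D ξ x i = 0 := by
  have hpull := hiso x i i
  rw [← dotProduct_mulVec_eq_sum_sum] at hpull
  change ximapDeriv ξ x i ⬝ᵥ gBS D δ (x, ξ x) *ᵥ ximapDeriv ξ x i = D.g x i i at hpull
  rw [ximapDeriv_dotProduct_gBS_mulVec, add_assoc, add_eq_left] at hpull
  by_contra hne
  have hpos : 0 < nabla D ξ x i ⬝ᵥ D.g x *ᵥ nabla D ξ x i := by
    simpa using (D.g_posdef x).dotProduct_mulVec_pos hne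
  nlinarith [sq_nonneg δ, mul_self_nonneg (nabla D ξ x i ⬝ᵥ wvec D (x, ξ x))]

theorem gBS_mulVec_aframe_inl (p : TMpt n) (j : Fin n) :
    gBS D δ p *ᵥ aframe D (Sum.inl j) p = Sum.elim (D.g p.1 j) 0 := by
  rw [← (gBS_isSymm D δ p).eq, mulVec_transpose, gBS, ← vecMul_vecMul, ← vecMul_vecMul,
    vecMul_transpose, Bmat_mulVec_aframe, gBSad_eq_fromBlocks, Bmat_eq_fromBlocks,
    single_one_vecMul, vecMul_fromBlocks]
  ext (h | h) <;> simp [fromBlocks, vecMul, dotProduct]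

theorem dotProduct_gBS_mulVec_comm (p : TMpt n) (u v : Idx n → ℝ) :
    u ⬝ᵥ gBS D δ p *ᵥ v = v ⬝ᵥ gBS D δ p *ᵥ u := by
  rw [dotProduct_mulVec, ← mulVec_transpose, (gBS_isSymm D δ p).eq, dotProduct_comm]

theorem aframe_inl_dotProduct_gBS_mulVec (p : TMpt n) (i j : Fin n) :
    aframe D (Sum.inl i) p ⬝ᵥ gBS D δ p *ᵥ aframe D (Sum.inl j) p =
      D.g p.1 i j := by
  rw [gBS_mulVec_aframe_inl]
  simp [dotProduct, Fintype.sum_sum_type, aframe, D.g_apply_comm p.1 j i]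

theorem pdT_aframe_inl (p : TMpt n) (i : Fin n) (d : Idx n) :
    (fun a => pdT d (fun q => aframe D (Sum.inl i) q a) p) =
      Sum.elim (0 : Fin n → ℝ) fun h => pdT d (fun q => aframe D (Sum.inl i) q (Sum.inr h)) p := by
  ext (h | h)
  · simp [pdT, aframe]
  · rfl

theorem contDiff_aframe_inl (i : Fin n) (a : Idx n) :
    ContDiff ℝ (⊤ : ℕ∞) fun q => aframe D (Sum.inl i) q a := by
  have hΓ := contDiff_Gamma D
  rcases a with h | h <;> simp only [aframe, Gamma0, Sum.elim_inl, Sum.elim_inr] <;> fun_prop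

theorem aframe_inl_dotProduct_pdT_gBS_mulVec (p : TMpt n) (i j : Fin n) (d : Idx n) :
    aframe D (Sum.inl i) p ⬝ᵥ (of fun a b => pdT d (fun q => gBS D δ q a b) p) *ᵥ
        aframe D (Sum.inl j) p = pdT d (fun q => D.g q.1 i j) p := by
  have hE (i : Fin n) (a : Idx n) :=
    (contDiff_aframe_inl D i a).differentiable (by simp) p
  simp_rw [← aframe_inl_dotProduct_gBS_mulVec D δ _ i j]
  rw [pdT, fderiv_dotProduct_mulVec_apply (hE i)
    (fun a b => (contDiff_gBS D δ a b).differentiable (by simp) p) (hE j)]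
  change _ = (fun a => pdT d (fun q => aframe D (Sum.inl i) q a) p) ⬝ᵥ _ + _ + _ ⬝ᵥ _ *ᵥ
    (fun a => pdT d (fun q => aframe D (Sum.inl j) q a) p)
  rw [dotProduct_gBS_mulVec_comm D δ p (aframe D (Sum.inl i) p), pdT_aframe_inl, pdT_aframe_inl,
    gBS_mulVec_aframe_inl, gBS_mulVec_aframe_inl, sumElim_zero_dotProduct_sumElim_zero,
    sumElim_zero_dotProduct_sumElim_zero, zero_add, add_zero]
  rfl

theorem ximapDeriv_eq_aframe {ξ : (Fin n → ℝ) → Fin n → ℝ} (hiso : IsIsometricImmersion D δ ξ)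
    (x : Fin n → ℝ) (i : Fin n) : ximapDeriv ξ x i = aframe D (Sum.inl i) (x, ξ x) := by
  ext (h | h)
  · simp [ximapDeriv_inl, aframe, Pi.single_apply]
  · have hnabla := congrFun (nabla_eq_zero_of_isIsometricImmersion D δ hiso x i) h
    simp only [nabla, Pi.zero_apply] at hnabla
    simp only [aframe, Gamma0, Sum.elim_inl, Sum.elim_inr]
    exact eq_neg_of_add_eq_zero_left hnabla

theorem contDiff_ximapDeriv {ξ : (Fin n → ℝ) → Fin n → ℝ}
    (hξ : ∀ h, ContDiff ℝ (⊤ : ℕ∞) fun x => ξ x h) (i : Fin n) (a : Idx n) :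
    ContDiff ℝ (⊤ : ℕ∞) fun x => ximapDeriv ξ x i a := by
  rcases a with h | h
  · simp only [ximapDeriv_inl]
    exact contDiff_const
  · exact contDiff_pd (hξ h) i

theorem sum_comp_smul_ebase (v : TMpt n) : ∑ a, comp v a • ebase a = v := by
  simp [Fintype.sum_sum_type, comp, ebase, Prod.ext_iff, Prod.fst_sum, Prod.snd_sum,
    ← Pi.single_smul, Finset.univ_sum_single]

theorem pd_comp_ximap {ξ : (Fin n → ℝ) → Fin n → ℝ}
    (hξ : ∀ h, ContDiff ℝ (⊤ : ℕ∞) fun x => ξ x h) {f : TMpt n → ℝ}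
    (hf : ContDiff ℝ (⊤ : ℕ∞) f) (x : Fin n → ℝ) (i : Fin n) :
    pd i (fun y => f (y, ξ y)) x = ximapDeriv ξ x i ⬝ᵥ fun a => pdT a f (x, ξ x) := by
  have hξd : DifferentiableAt ℝ ξ x :=
    (contDiff_pi.mpr hξ).differentiable (by simp) x
  have hchain : pd i (fun y => f (y, ξ y)) x =
      fderiv ℝ f (x, ξ x) (Pi.single i 1, fderiv ℝ ξ x (Pi.single i 1)) := by
    rw [pd, show (fun y => f (y, ξ y)) = f ∘ fun y => (y, ξ y) from rfl,
      fderiv_comp x (hf.differentiable (by simp) _) (differentiableAt_fun_id.prodMk hξd),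
      DifferentiableAt.fderiv_prodMk differentiableAt_fun_id hξd]
    simp
  have hcomp : comp (Pi.single i 1, fderiv ℝ ξ x (Pi.single i 1)) = ximapDeriv ξ x i := by
    ext (h | h)
    · simp [comp, ximapDeriv_inl]
    · simp [comp, ximapDeriv, ximap, pd, fderiv_pi (fun h => (hξ h).differentiable (by simp) x)]
  rw [hchain, ← sum_comp_smul_ebase (Pi.single i 1, _), map_sum, hcomp]
  simp [dotProduct, pdT]

theorem pdT_comp_fst {f : (Fin n → ℝ) → ℝ} (hf : ContDiff ℝ (⊤ : ℕ∞) f) (p : TMpt n)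
    (d : Idx n) : pdT d (fun q => f q.1) p = Sum.elim (fun m => pd m f p.1) 0 d := by
  rw [pdT, show (fun q : TMpt n => f q.1) = f ∘ Prod.fst from rfl,
    fderiv_comp p (hf.differentiable (by simp) _) differentiableAt_fst, fderiv_fst]
  rcases d with m | m <;> simp [ebase, pd]

theorem pd_ximapDeriv_comm {ξ : (Fin n → ℝ) → Fin n → ℝ}
    (hξ : ∀ h, ContDiff ℝ (⊤ : ℕ∞) fun x => ξ x h) (x : Fin n → ℝ) (i j : Fin n) (c : Idx n) :
    pd i (fun y => ximapDeriv ξ y j c) x = pd j (fun y => ximapDeriv ξ y i c) x := by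
  rcases c with h | h
  · simp [ximapDeriv_inl, pd]
  · exact fderiv_fderiv_apply_comm ((hξ h).of_le (WithTop.coe_le_coe.2 le_top)) x _ _

theorem mulVec_GammaT {G : TMpt n → Matrix (Idx n) (Idx n) ℝ} {p : TMpt n}
    (hG : IsUnit (G p).det) (a b : Idx n) :
    G p *ᵥ (fun c => GammaT G p a b c) = fun d =>
      1 / 2 * (pdT a (fun q => G q b d) p + pdT b (fun q => G q a d) p
        - pdT d (fun q => G q a b) p) := by
  have hΓ : (fun c => GammaT G p a b c) = (1 / 2 : ℝ) • ((G p)⁻¹ *ᵥ fun d =>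
      pdT a (fun q => G q b d) p + pdT b (fun q => G q a d) p - pdT d (fun q => G q a b) p) := by
    ext c
    simp [GammaT, mulVec, dotProduct]
  rw [hΓ, mulVec_smul, mulVec_mulVec, mul_nonsing_inv _ hG, one_mulVec]
  rfl

theorem g_mulVec_Gamma (x : Fin n → ℝ) (i j : Fin n) :
    D.g x *ᵥ (fun l => Gamma D x i j l) = fun m =>
      1 / 2 * (pd i (fun y => D.g y j m) x + pd j (fun y => D.g y i m) x
        - pd m (fun y => D.g y i j) x) := by
  have hΓ : (fun l => Gamma D x i j l) = (1 / 2 : ℝ) • ((D.g x)⁻¹ *ᵥ fun m =>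
      pd i (fun y => D.g y j m) x + pd j (fun y => D.g y i m) x
        - pd m (fun y => D.g y i j) x) := by
    ext l
    simp [Gamma, mulVec, dotProduct]
  rw [hΓ, mulVec_smul, mulVec_mulVec, mul_nonsing_inv _ (D.det_g_ne_zero x).isUnit, one_mulVec]
  rfl

theorem pd_gBS_mulVec_ximapDeriv {ξ : (Fin n → ℝ) → Fin n → ℝ}
    (hξ : ∀ h, ContDiff ℝ (⊤ : ℕ∞) fun x => ξ x h) (x : Fin n → ℝ) (i j : Fin n) (d : Idx n) :
    pd i (fun y => (gBS D δ (y, ξ y) *ᵥ ximapDeriv ξ y j) d) x =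
      (fun c => pd i (fun y => gBS D δ (y, ξ y) d c) x) ⬝ᵥ ximapDeriv ξ x j
        + (gBS D δ (x, ξ x) *ᵥ fun c => pd i (fun y => ximapDeriv ξ y j c) x) d := by
  have hG (c : Idx n) : ContDiff ℝ (⊤ : ℕ∞) fun y => gBS D δ (y, ξ y) d c :=
    (contDiff_gBS D δ d c).comp (contDiff_id.prodMk (contDiff_pi.mpr hξ))
  exact fderiv_dotProduct_apply (fun c => (hG c).differentiable (by simp) x)
    (fun c => (contDiff_ximapDeriv hξ j c).differentiable (by simp) x) _

theorem gBS_mulVec_GammaT_ximapDeriv {ξ : (Fin n → ℝ) → Fin n → ℝ}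
    (hξ : ∀ h, ContDiff ℝ (⊤ : ℕ∞) fun x => ξ x h) (x : Fin n → ℝ) (i j : Fin n) (d : Idx n) :
    (gBS D δ (x, ξ x) *ᵥ fun c =>
        ∑ a, ∑ b, GammaT (gBS D δ) (x, ξ x) a b c * ximapDeriv ξ x i a * ximapDeriv ξ x j b) d =
      1 / 2 * ((fun c => pd i (fun y => gBS D δ (y, ξ y) d c) x) ⬝ᵥ ximapDeriv ξ x j
        + (fun c => pd j (fun y => gBS D δ (y, ξ y) d c) x) ⬝ᵥ ximapDeriv ξ x i
        - ximapDeriv ξ x i ⬝ᵥ (of fun a b => pdT d (fun q => gBS D δ q a b) (x, ξ x)) *ᵥ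
            ximapDeriv ξ x j) := by
  have hsymm (a b : Idx n) : (fun q => gBS D δ q a b) = fun q => gBS D δ q b a :=
    funext fun q => (gBS_isSymm D δ q).apply b a
  have hlower : (gBS D δ (x, ξ x) *ᵥ fun c =>
        ∑ a, ∑ b, GammaT (gBS D δ) (x, ξ x) a b c * ximapDeriv ξ x i a * ximapDeriv ξ x j b) d =
      ximapDeriv ξ x i ⬝ᵥ (of fun a b => (gBS D δ (x, ξ x) *ᵥ fun c =>
        GammaT (gBS D δ) (x, ξ x) a b c) d) *ᵥ ximapDeriv ξ x j := by
    simp only [mulVec, dotProduct, of_apply, Finset.mul_sum, Finset.sum_mul]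
    rw [Finset.sum_comm]
    refine Finset.sum_congr rfl fun a _ => ?_
    rw [Finset.sum_comm]
    exact Finset.sum_congr rfl fun b _ => Finset.sum_congr rfl fun c _ => by ring
  have hsplit : (of fun a b => (gBS D δ (x, ξ x) *ᵥ fun c =>
        GammaT (gBS D δ) (x, ξ x) a b c) d) =
      (1 / 2 : ℝ) • ((of fun a b => pdT a (fun q => gBS D δ q d b) (x, ξ x))
        + (of fun a b => pdT b (fun q => gBS D δ q d a) (x, ξ x))
        - of fun a b => pdT d (fun q => gBS D δ q a b) (x, ξ x)) := by
    ext a b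
    simp only [of_apply, Matrix.add_apply, Matrix.sub_apply, Matrix.smul_apply, smul_eq_mul,
      mulVec_GammaT (isUnit_det_gBS D δ (x, ξ x)), hsymm b d, hsymm a d]
  have hchain (k : Fin n) (c : Idx n) :
      pd k (fun y => gBS D δ (y, ξ y) d c) x =
        ximapDeriv ξ x k ⬝ᵥ fun a => pdT a (fun q => gBS D δ q d c) (x, ξ x) :=
    pd_comp_ximap hξ (contDiff_gBS D δ d c) x k
  rw [hlower, hsplit, smul_mulVec, dotProduct_smul, sub_mulVec, add_mulVec, dotProduct_sub,
    dotProduct_add, smul_eq_mul, dotProduct_mulVec (ximapDeriv ξ x i) (of _),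
    dotProduct_comm _ (ximapDeriv ξ x j)]
  simp only [hchain]
  congr 3
  · rw [dotProduct_comm]
    rfl
  · rw [dotProduct_comm]
    congr 1
    ext a
    exact dotProduct_comm _ _

theorem gBS_mulVec_betaM2TM {ξ : (Fin n → ℝ) → Fin n → ℝ}
    (hξ : ∀ h, ContDiff ℝ (⊤ : ℕ∞) fun x => ξ x h) (x : Fin n → ℝ) (i j : Fin n) (d : Idx n) :
    (gBS D δ (x, ξ x) *ᵥ fun c => betaM2TM D δ ξ x i j c) d =
      1 / 2 * (pd i (fun y => (gBS D δ (y, ξ y) *ᵥ ximapDeriv ξ y j) d) x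
        + pd j (fun y => (gBS D δ (y, ξ y) *ᵥ ximapDeriv ξ y i) d) x
        - ximapDeriv ξ x i ⬝ᵥ (of fun a b => pdT d (fun q => gBS D δ q a b) (x, ξ x)) *ᵥ
            ximapDeriv ξ x j)
      - ∑ m, Gamma D x i j m * (gBS D δ (x, ξ x) *ᵥ ximapDeriv ξ x m) d := by
  have hβ : (fun c => betaM2TM D δ ξ x i j c) =
      (fun c => pd i (fun y => ximapDeriv ξ y j c) x) - ∑ m, Gamma D x i j m • ximapDeriv ξ x m
        + fun c => ∑ a, ∑ b,
          GammaT (gBS D δ) (x, ξ x) a b c * ximapDeriv ξ x i a * ximapDeriv ξ x j b := by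
    ext c
    simp [betaM2TM, ximapDeriv]
  have hij := pd_gBS_mulVec_ximapDeriv D δ hξ x i j d
  have hji := pd_gBS_mulVec_ximapDeriv D δ hξ x j i d
  -- Schwarz: both product rules contain the same `g_BS(∂ᵢ dξ(∂ⱼ), ·)`, and averaging them
  -- cancels the first-kind Christoffel terms of `g_BS`.
  simp only [pd_ximapDeriv_comm hξ x j i] at hji
  have hΓT := gBS_mulVec_GammaT_ximapDeriv D δ hξ x i j d
  rw [hβ, mulVec_add, mulVec_sub, Pi.add_apply, Pi.sub_apply, hΓT]
  simp only [mulVec_sum, mulVec_smul, Finset.sum_apply, Pi.smul_apply, smul_eq_mul]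
  linarith

theorem betaM2TM_eq_zero {ξ : (Fin n → ℝ) → Fin n → ℝ}
    (hξ : ∀ h, ContDiff ℝ (⊤ : ℕ∞) fun x => ξ x h) (hiso : IsIsometricImmersion D δ ξ)
    (x : Fin n → ℝ) (i j : Fin n) :
    (fun c => betaM2TM D δ ξ x i j c) = 0 := by
  have hT (y : Fin n → ℝ) (k : Fin n) :
      gBS D δ (y, ξ y) *ᵥ ximapDeriv ξ y k = Sum.elim (D.g y k) 0 := by
    rw [ximapDeriv_eq_aframe D δ hiso, gBS_mulVec_aframe_inl]
  have hdG (d : Idx n) :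
      ximapDeriv ξ x i ⬝ᵥ (of fun a b => pdT d (fun q => gBS D δ q a b) (x, ξ x)) *ᵥ
        ximapDeriv ξ x j = Sum.elim (fun m => pd m (fun y => D.g y i j) x) 0 d := by
    rw [ximapDeriv_eq_aframe D δ hiso, ximapDeriv_eq_aframe D δ hiso,
      aframe_inl_dotProduct_pdT_gBS_mulVec, pdT_comp_fst (D.g_smooth i j)]
  refine eq_zero_of_mulVec_eq_zero (isUnit_det_gBS D δ (x, ξ x)).ne_zero ?_
  ext (m | m)
  · have hΓ : ∑ l, Gamma D x i j l * D.g x l m = (D.g x *ᵥ fun l => Gamma D x i j l) m := by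
      simp only [mulVec, dotProduct, D.g_apply_comm x m, mul_comm]
    simp only [gBS_mulVec_betaM2TM D δ hξ, hT, hdG, Sum.elim_inl, Pi.zero_apply, hΓ,
      g_mulVec_Gamma]
    ring
  · simp [gBS_mulVec_betaM2TM D δ hξ, hT, hdG, pd]

theorem xi_isometricImmersion_totallyGeodesic_harmonic_general (k : ℕ) (D : PreData (2 * k))
    (δ : ℝ) (ξ : (Fin (2 * k) → ℝ) → Fin (2 * k) → ℝ)
    (hξ : ∀ h, ContDiff ℝ (⊤ : ℕ∞) fun x => ξ x h)
    (hiso : IsIsometricImmersion D δ ξ) :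
    (∀ (x : Fin (2 * k) → ℝ) (i j : Fin (2 * k)) (c : Idx (2 * k)),
        betaM2TM D δ ξ x i j c = 0) ∧
    (∀ (x : Fin (2 * k) → ℝ) (c : Idx (2 * k)),
        (∑ i, ∑ j, (D.g x)⁻¹ i j * betaM2TM D δ ξ x i j c) = 0) := by
  have hβ (x : Fin (2 * k) → ℝ) (i j : Fin (2 * k)) (c : Idx (2 * k)) :
      betaM2TM D δ ξ x i j c = 0 :=
    congrFun (betaM2TM_eq_zero D δ hξ hiso x i j) c
  exact ⟨hβ, fun x c => by simp [hβ]⟩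

/-- If a vector field `ξ`, regarded as a map `ξ : (M, g) → (TM, g_BS)`,
is an isometric immersion, then `ξ` is totally geodesic; furthermore `ξ` is harmonic. -/
theorem xi_isometricImmersion_totallyGeodesic_harmonic (k : ℕ) (D : PreData (2 * k))
    (hD : IsAntiParaKahler D) (δ : ℝ) (ξ : (Fin (2 * k) → ℝ) → Fin (2 * k) → ℝ)
    (hξ : ∀ h, ContDiff ℝ (⊤ : ℕ∞) fun x => ξ x h)
    (hiso : IsIsometricImmersion D δ ξ) :
    (∀ (x : Fin (2 * k) → ℝ) (i j : Fin (2 * k)) (c : Idx (2 * k)),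
        betaM2TM D δ ξ x i j c = 0) ∧
    (∀ (x : Fin (2 * k) → ℝ) (c : Idx (2 * k)),
        (∑ i, ∑ j, (D.g x)⁻¹ i j * betaM2TM D δ ξ x i j c) = 0) :=
  xi_isometricImmersion_totallyGeodesic_harmonic_general k D δ ξ hξ hiso

end BergerSasaki
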